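/- For the Spin 3-form H_a{}^b := (1/2) ε_{ab'cd} h^{bb'} e^d ∧ T^c, where T^c = (1/2) T^c{}_{a'c'} e^{a'}∧e^{c'} with T^c{}_{a'c'} = −T^c{}_{c'a'}, one has H_a{}^b = (1/2) h^{bb'} ( T^c{}_{b'c} e^{(3)}_a + T^c{}_{ca} e^{(3)}_{b'} + T^c{}_{ab'} e^{(3)}_c ). -/

import Mathlib

open scoped BigOperators

/-- The Minkowski metric diag(-1,1,1,1). -/
noncomputable def hM : Matrix (Fin 4) (Fin 4) ℝ := Matrix.diagonal ![-1, 1, 1, 1]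

/-- The Levi-Civita symbol `ε_{abcd}` with `ε_{0123} = 1`. -/
noncomputable def eps (a b c d : Fin 4) : ℝ :=
  Matrix.det (Matrix.of fun i j => if ![a, b, c, d] i = j then (1 : ℝ) else 0)

/-- The coframe 1-forms `e^a` as generators of the exterior algebra of `ℝ⁴`. -/
noncomputable def ef (a : Fin 4) : ExteriorAlgebra ℝ (Fin 4 → ℝ) :=
  ExteriorAlgebra.ι ℝ (Pi.single a (1 : ℝ))

/-- Interior product with the frame vector dual to `e^a`. -/
noncomputable def contr (a : Fin 4) :
    ExteriorAlgebra ℝ (Fin 4 → ℝ) →ₗ[ℝ] ExteriorAlgebra ℝ (Fin 4 → ℝ) :=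
  CliffordAlgebra.contractLeft (LinearMap.proj a)

noncomputable def e4 : ExteriorAlgebra ℝ (Fin 4 → ℝ) := ef 0 * ef 1 * ef 2 * ef 3

noncomputable def e3 (a : Fin 4) : ExteriorAlgebra ℝ (Fin 4 → ℝ) := contr a e4

/-- The torsion 2-form `T^c := (1/2) T^c{}_{a'c'} e^{a'} ∧ e^{c'}`. -/
noncomputable def Tform (T : Fin 4 → Fin 4 → Fin 4 → ℝ) (c : Fin 4) :
    ExteriorAlgebra ℝ (Fin 4 → ℝ) :=
  (1 / 2 : ℝ) • ∑ a', ∑ c', T c a' c' • (ef a' * ef c')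

/-- The Spin 3-form `H_a{}^b := (1/2) ε_{ab'cd} h^{bb'} e^d ∧ T^c`. -/
noncomputable def Hform (T : Fin 4 → Fin 4 → Fin 4 → ℝ) (a b : Fin 4) :
    ExteriorAlgebra ℝ (Fin 4 → ℝ) :=
  (1 / 2 : ℝ) • ∑ b', ∑ c, ∑ d, (eps a b' c d * hM⁻¹ b b') • (ef d * Tform T c)

/-!
The Levi-Civita symbol is the Vandermonde product `∏_{i<j} (x_j - x_i)` of its indices divided
by `12`: the matrix defining `eps a b c d` carries the Vandermonde matrix of `(0, 1, 2, 3)` to that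
of `(a, b, c, d)`. This makes `ε` a computable integer function, so the contraction identity
`∑_d ε_{abcd} ε_{fdpq} = δ_{fa} δ^{pq}_{bc} + δ_{fb} δ^{pq}_{ca} + δ_{fc} δ^{pq}_{ab}` is checked by
evaluation. Combined with `e^d ∧ e^p ∧ e^q = ε_{fdpq} e⁽³⁾_f` it gives
`ε_{abcd} e^d ∧ e^p ∧ e^q = δ^{pq}_{bc} e⁽³⁾_a + δ^{pq}_{ca} e⁽³⁾_b + δ^{pq}_{ab} e⁽³⁾_c`, and
contracting with the antisymmetric `T^c{}_{pq} / 2` yields the formula for each `b'` and `c`; the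
metric factor `h^{bb'}` only rides along.
-/

open Matrix

theorem det_of_ite_mul_det_vandermonde {R : Type*} [CommRing R] {n : ℕ} (f : Fin n → Fin n)
    (v : Fin n → R) :
    det (of fun i j => if f i = j then (1 : R) else 0) * det (vandermonde v)
      = det (vandermonde (v ∘ f)) := by
  rw [← det_mul]
  congr 1
  ext i k
  simp [mul_apply, vandermonde]

theorem prod_Ioi_fin_four {M : Type*} [CommMonoid M] (g : Fin 4 → Fin 4 → M) :
    ∏ i : Fin 4, ∏ j ∈ Finset.Ioi i, g i j = g 0 1 * g 0 2 * g 0 3 * g 1 2 * g 1 3 * g 2 3 := by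
  rw [Fin.prod_univ_four, show Finset.Ioi (0 : Fin 4) = {1, 2, 3} by decide,
    show Finset.Ioi (1 : Fin 4) = {2, 3} by decide, show Finset.Ioi (2 : Fin 4) = {3} by decide,
    show Finset.Ioi (3 : Fin 4) = ∅ by decide]
  simp [mul_assoc]

def vandermondeProd (a b c d : Fin 4) : ℤ :=
  ((b : ℤ) - a) * ((c : ℤ) - a) * ((d : ℤ) - a) * ((c : ℤ) - b) * ((d : ℤ) - b) * ((d : ℤ) - c)

theorem eps_eq_vandermondeProd_div (a b c d : Fin 4) :
    eps a b c d = (vandermondeProd a b c d : ℝ) / 12 := by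
  have h := det_of_ite_mul_det_vandermonde ![a, b, c, d] (fun i : Fin 4 => (i : ℝ))
  simp only [det_vandermonde, prod_Ioi_fin_four, Function.comp_apply, Matrix.cons_val] at h
  norm_num at h
  rw [eq_div_iff (by norm_num), eps, vandermondeProd]
  push_cast
  linear_combination h

def genKronecker {ι R : Type*} [DecidableEq ι] [Ring R] (x y p q : ι) : R :=
  (if p = x then 1 else 0) * (if q = y then 1 else 0)
    - (if q = x then 1 else 0) * (if p = y then 1 else 0)

@[simp, norm_cast]
theorem cast_genKronecker {ι R : Type*} [DecidableEq ι] [Ring R] (x y p q : ι) :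
    ((genKronecker x y p q : ℤ) : R) = genKronecker x y p q := by
  simp only [genKronecker, Int.cast_sub, Int.cast_mul, apply_ite Int.cast, Int.cast_one,
    Int.cast_zero]

theorem sum_sum_mul_genKronecker {ι R : Type*} [Fintype ι] [DecidableEq ι] [CommRing R]
    (S : ι → ι → R) (hS : ∀ p q, S p q = -S q p) (x y : ι) :
    ∑ p, ∑ q, S p q * genKronecker x y p q = 2 * S x y := by
  simp only [genKronecker, mul_sub, Finset.sum_sub_distrib, mul_ite, mul_one, mul_zero,
    Finset.sum_ite_eq', Finset.mem_univ, if_true, Finset.sum_ite_irrel, Finset.sum_const_zero,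
    hS y x]
  ring

theorem sum_vandermondeProd_mul_vandermondeProd : ∀ a b c f p q : Fin 4,
    ∑ d, vandermondeProd a b c d * vandermondeProd f d p q =
      144 * ((if f = a then 1 else 0 : ℤ) * genKronecker b c p q
        + (if f = b then 1 else 0) * genKronecker c a p q
        + (if f = c then 1 else 0) * genKronecker a b p q) := by
  decide +kernel

theorem sum_eps_mul_eps (a b c f p q : Fin 4) :
    ∑ d, eps a b c d * eps f d p q =
      (if f = a then 1 else 0) * genKronecker b c p q
        + (if f = b then 1 else 0) * genKronecker c a p q
        + (if f = c then 1 else 0) * genKronecker a b p q := by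
  simp only [eps_eq_vandermondeProd_div, div_mul_div_comm, ← Finset.sum_div, ← Int.cast_mul,
    ← Int.cast_sum, sum_vandermondeProd_mul_vandermondeProd]
  push_cast [apply_ite]
  ring

theorem ef_mul_ef_self (i : Fin 4) : ef i * ef i = 0 := ExteriorAlgebra.ι_sq_zero _

theorem ef_mul_ef_comm (i j : Fin 4) : ef i * ef j = -(ef j * ef i) :=
  eq_neg_of_add_eq_zero_left (ExteriorAlgebra.ι_add_mul_swap _ _)

theorem ef_mul_ef_mul_self (i : Fin 4) (x : ExteriorAlgebra ℝ (Fin 4 → ℝ)) :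
    ef i * (ef i * x) = 0 := by
  rw [← mul_assoc, ef_mul_ef_self, zero_mul]

theorem ef_mul_ef_mul_comm (i j : Fin 4) (x : ExteriorAlgebra ℝ (Fin 4 → ℝ)) :
    ef i * (ef j * x) = -(ef j * (ef i * x)) := by
  rw [← mul_assoc, ← mul_assoc, ef_mul_ef_comm i j, neg_mul]

theorem e3_zero : e3 0 = ef 1 * (ef 2 * ef 3) := by
  simp [e3, e4, contr, ef, mul_assoc, CliffordAlgebra.contractLeft_ι_mul,
    CliffordAlgebra.contractLeft_ι]

theorem e3_one : e3 1 = -(ef 0 * (ef 2 * ef 3)) := by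
  simp [e3, e4, contr, ef, mul_assoc, CliffordAlgebra.contractLeft_ι_mul,
    CliffordAlgebra.contractLeft_ι]

theorem e3_two : e3 2 = ef 0 * (ef 1 * ef 3) := by
  simp [e3, e4, contr, ef, mul_assoc, CliffordAlgebra.contractLeft_ι_mul,
    CliffordAlgebra.contractLeft_ι]

theorem e3_three : e3 3 = -(ef 0 * (ef 1 * ef 2)) := by
  simp [e3, e4, contr, ef, mul_assoc, CliffordAlgebra.contractLeft_ι_mul,
    CliffordAlgebra.contractLeft_ι]

set_option maxHeartbeats 1000000 in
theorem ef_mul_ef_mul_ef_eq_sum_e3 (i j k : Fin 4) :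
    ef i * (ef j * ef k) = ∑ f, eps f i j k • e3 f := by
  simp only [Fin.sum_univ_four, e3_zero, e3_one, e3_two, e3_three, eps_eq_vandermondeProd_div]
  fin_cases i <;> fin_cases j <;> fin_cases k <;>
    simp only [Fin.mk_one, Fin.zero_eta, Fin.reduceFinMk] <;>
    norm_num [vandermondeProd, ef_mul_ef_self, ef_mul_ef_mul_self,
      ef_mul_ef_comm 1 0, ef_mul_ef_comm 2 0, ef_mul_ef_comm 2 1, ef_mul_ef_comm 3 0,
      ef_mul_ef_comm 3 1, ef_mul_ef_comm 3 2, ef_mul_ef_mul_comm 1 0, ef_mul_ef_mul_comm 2 0,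
      ef_mul_ef_mul_comm 2 1, ef_mul_ef_mul_comm 3 0, ef_mul_ef_mul_comm 3 1,
      ef_mul_ef_mul_comm 3 2]

theorem sum_eps_smul_ef_mul_ef_mul_ef (a b c p q : Fin 4) :
    ∑ d, eps a b c d • (ef d * (ef p * ef q)) =
      (genKronecker b c p q : ℝ) • e3 a + (genKronecker c a p q : ℝ) • e3 b
        + (genKronecker a b p q : ℝ) • e3 c := by
  have h : ∑ d, eps a b c d • (ef d * (ef p * ef q))
      = ∑ f, (∑ d, eps a b c d * eps f d p q) • e3 f := by
    simp only [ef_mul_ef_mul_ef_eq_sum_e3, Finset.smul_sum, smul_smul, Finset.sum_smul]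
    exact Finset.sum_comm
  simp [h, sum_eps_mul_eps, add_smul, ite_smul, Finset.sum_add_distrib]

theorem sum_eps_smul_ef_mul_Tform (T : Fin 4 → Fin 4 → Fin 4 → ℝ) (e : Fin 4)
    (hT : ∀ p q, T e p q = -T e q p) (a b c : Fin 4) :
    ∑ d, eps a b c d • (ef d * Tform T e) = T e b c • e3 a + T e c a • e3 b + T e a b • e3 c := by
  have h : ∑ d, eps a b c d • (ef d * Tform T e)
      = (1 / 2 : ℝ) • ∑ p, ∑ q, T e p q • ∑ d, eps a b c d • (ef d * (ef p * ef q)) := by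
    simp only [Tform, mul_smul_comm, Finset.mul_sum, Finset.smul_sum, smul_comm (eps _ _ _ _)]
    rw [Finset.sum_comm]
    exact Finset.sum_congr rfl fun p _ => Finset.sum_comm
  simp only [h, sum_eps_smul_ef_mul_ef_mul_ef, smul_add, Finset.sum_add_distrib, smul_smul,
    ← Finset.sum_smul, sum_sum_mul_genKronecker _ hT, one_div, inv_mul_cancel_left₀ (two_ne_zero' ℝ)]

/-- `H_a{}^b = (1/2) h^{bb'} ( T^c{}_{b'c} e⁽³⁾_a + T^c{}_{ca} e⁽³⁾_{b'} + T^c{}_{ab'} e⁽³⁾_c )`. -/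
theorem spin_three_form_eq (T : Fin 4 → Fin 4 → Fin 4 → ℝ)
    (hT : ∀ c a' c', T c a' c' = - T c c' a') (a b : Fin 4) :
    Hform T a b
      = (1 / 2 : ℝ) • ∑ b', ∑ c, hM⁻¹ b b' •
          (T c b' c • e3 a + T c c a • e3 b' + T c a b' • e3 c) := by
  have hH : Hform T a b
      = (1 / 2 : ℝ) • ∑ b', ∑ c, hM⁻¹ b b' • ∑ d, eps a b' c d • (ef d * Tform T c) := by
    simp only [Hform, Finset.smul_sum, smul_smul, mul_comm]
  simp only [hH, sum_eps_smul_ef_mul_Tform T _ (hT _)]
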